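/- arXiv:1306.0036 — 8 statements merged into one kernel-verified Lean document; each statement's English description precedes it below -/
import Mathlib

section
/- Every node of the information graph has exactly one descendant. Precisely: for all k, k' ∈ ℕ and j, j' ∈ V, if s(k,j) = s(k',j') then s(k+1,j) = s(k'+1,j'). Consequently, for every r ∈ U there is exactly one s ∈ U with r → s, so the successor map σ : U → U with σ(s(k,j)) = s(k+1,j) is well defined. -/
/-- The reachability set `s(k,j) = {i : D i j ≤ k}`. -/
def reach {V : Type*} (D : V → V → ℕ∞) (k : ℕ) (j : V) : Set V :=
  {i | D i j ≤ (k : ℕ∞)}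

/-- The node set of the information graph: `U = {s(k,j) : k ∈ ℕ, j ∈ V}`. -/
def infoNodes {V : Type*} (D : V → V → ℕ∞) : Set (Set V) :=
  {s | ∃ (k : ℕ) (j : V), s = reach D k j}

/-- The edge relation of the information graph: `r → s` iff
`r = s(k,j)` and `s = s(k+1,j)` for some `k, j`. -/
def infoEdge {V : Type*} (D : V → V → ℕ∞) (r s : Set V) : Prop :=
  ∃ (k : ℕ) (j : V), r = reach D k j ∧ s = reach D (k + 1) j

/-! By the one-step decomposition (c), `s(k+1,j)` is the set of nodes within delay `1` of
`s(k,j)`, so it depends on the set `s(k,j)` alone and not on the pair `(k,j)` representing it. -/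

section InformationGraph

variable {V : Type*} (D : V → V → ℕ∞)

lemma reach_succ_eq
    (hc : ∀ (k : ℕ) (i j : V),
      D i j ≤ (k : ℕ∞) + 1 ↔ ∃ ℓ, D i ℓ ≤ 1 ∧ D ℓ j ≤ (k : ℕ∞))
    (k : ℕ) (j : V) :
    reach D (k + 1) j = {i | ∃ ℓ ∈ reach D k j, D i ℓ ≤ 1} := by
  ext i
  simp only [reach, Set.mem_ofPred_eq, Nat.cast_add, Nat.cast_one, hc k i j]
  tauto

variable {D}

lemma reach_succ_congr
    (hc : ∀ (k : ℕ) (i j : V),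
      D i j ≤ (k : ℕ∞) + 1 ↔ ∃ ℓ, D i ℓ ≤ 1 ∧ D ℓ j ≤ (k : ℕ∞))
    {k k' : ℕ} {j j' : V} (h : reach D k j = reach D k' j') :
    reach D (k + 1) j = reach D (k' + 1) j' := by
  rw [reach_succ_eq D hc, reach_succ_eq D hc, h]

lemma existsUnique_infoEdge
    (hc : ∀ (k : ℕ) (i j : V),
      D i j ≤ (k : ℕ∞) + 1 ↔ ∃ ℓ, D i ℓ ≤ 1 ∧ D ℓ j ≤ (k : ℕ∞))
    {r : Set V} (hr : r ∈ infoNodes D) : ∃! s, infoEdge D r s := by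
  obtain ⟨k, j, rfl⟩ := hr
  refine ⟨reach D (k + 1) j, ⟨k, j, rfl, rfl⟩, ?_⟩
  rintro s ⟨k', j', hr, rfl⟩
  exact reach_succ_congr hc hr.symm

end InformationGraph

theorem unique_descendant_general {V : Type*} (D : V → V → ℕ∞)
    (hc : ∀ (k : ℕ) (i j : V),
      D i j ≤ (k : ℕ∞) + 1 ↔ ∃ ℓ, D i ℓ ≤ 1 ∧ D ℓ j ≤ (k : ℕ∞)) :
    (∀ (k k' : ℕ) (j j' : V), reach D k j = reach D k' j' →
        reach D (k + 1) j = reach D (k' + 1) j') ∧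
    (∀ r ∈ infoNodes D, ∃! s : Set V, infoEdge D r s) :=
  ⟨fun _ _ _ _ h => reach_succ_congr hc h, fun _ hr => existsUnique_infoEdge hc hr⟩

/-- Every node of the information graph has exactly one descendant:
if `s(k,j) = s(k',j')` then `s(k+1,j) = s(k'+1,j')`, and consequently
every `r ∈ U` has a unique `s` with `r → s` (so the successor map is well defined). -/
theorem unique_descendant {V : Type*} [Fintype V] (D : V → V → ℕ∞)
    (ha : ∀ i, D i i = 0)
    (hb : ∀ i ℓ j, D i j ≤ D i ℓ + D ℓ j)
    (hc : ∀ (k : ℕ) (i j : V),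
      D i j ≤ (k : ℕ∞) + 1 ↔ ∃ ℓ, D i ℓ ≤ 1 ∧ D ℓ j ≤ (k : ℕ∞)) :
    (∀ (k k' : ℕ) (j j' : V), reach D k j = reach D k' j' →
        reach D (k + 1) j = reach D (k' + 1) j') ∧
    (∀ r ∈ infoNodes D, ∃! s : Set V, infoEdge D r s) :=
  unique_descendant_general D hc
end

section
/- If the network graph has n = |V| ≥ 1 nodes, then the number of nodes of the information graph is bounded above by n² − n + 1, i.e. |U| ≤ n² − n + 1. -/
open Set

theorem IsChain.injOn_ncard {α : Type*} [Finite α] {c : Set (Set α)}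
    (hc : IsChain (· ⊆ ·) c) : InjOn ncard c := by
  intro s hs t ht hst
  rcases hc.total hs ht with hsub | hsub
  · exact eq_of_subset_of_ncard_le hsub hst.ge
  · exact (eq_of_subset_of_ncard_le hsub hst.le).symm

theorem IsChain.ncard_sdiff_univ_le {α : Type*} [Finite α] {c : Set (Set α)}
    (hc : IsChain (· ⊆ ·) c) (hne : ∀ s ∈ c, s.Nonempty) :
    (c \ {univ}).ncard ≤ Nat.card α - 1 := by
  have hmaps : ∀ s ∈ c \ {univ}, s.ncard ∈ (Finset.Icc 1 (Nat.card α - 1) : Set ℕ) := by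
    rintro s ⟨hs, hsu⟩
    have hpos : 0 < s.ncard := (ncard_pos).2 (hne s hs)
    have hlt : s.ncard < Nat.card α := ncard_lt_card hsu
    simp only [Finset.coe_Icc, mem_Icc]
    omega
  calc (c \ {univ}).ncard ≤ (Finset.Icc 1 (Nat.card α - 1) : Set ℕ).ncard :=
        ncard_le_ncard_of_injOn ncard hmaps ((hc.mono sdiff_subset).injOn_ncard)
    _ = Nat.card α - 1 := by simp

theorem reach_mono {V : Type*} (D : V → V → ℕ∞) (j : V) : Monotone (reach D · j) :=
  fun _ _ hkk' _ hi => le_trans (α := ℕ∞) hi (Nat.cast_le.2 hkk')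

theorem mem_reach_self {V : Type*} {D : V → V → ℕ∞} (ha : ∀ i, D i i = 0) (k : ℕ) (j : V) :
    j ∈ reach D k j := by
  simp [reach, ha j]

theorem infoNodes_eq_iUnion {V : Type*} (D : V → V → ℕ∞) :
    infoNodes D = ⋃ j, range (reach D · j) := by
  ext s
  simp only [infoNodes, mem_iUnion, mem_range]
  exact ⟨fun ⟨k, j, hs⟩ => ⟨j, k, hs.symm⟩, fun ⟨j, k, hs⟩ => ⟨k, j, hs.symm⟩⟩

theorem info_graph_upper_bound_general {V : Type*} [Fintype V]
    (D : V → V → ℕ∞)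
    (ha : ∀ i, D i i = 0) :
    (infoNodes D).ncard ≤ Fintype.card V ^ 2 - Fintype.card V + 1 := by
  have hchain (j : V) : ((range (reach D · j)) \ {univ}).ncard ≤ Fintype.card V - 1 := by
    rw [← Nat.card_eq_fintype_card]
    refine (reach_mono D j).isChain_range.ncard_sdiff_univ_le ?_
    rintro _ ⟨k, rfl⟩
    exact ⟨j, mem_reach_self ha k j⟩
  calc (infoNodes D).ncard ≤ (infoNodes D \ {univ}).ncard + 1 :=
        (ncard_le_ncard (subset_insert_sdiff_singleton univ _)).trans (ncard_insert_le _ _)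
    _ ≤ (∑ _ : V, (Fintype.card V - 1)) + 1 := by
        rw [infoNodes_eq_iUnion, iUnion_sdiff]
        gcongr
        exact (ncard_iUnion_le_of_fintype _).trans (Finset.sum_le_sum fun j _ => hchain j)
    _ = Fintype.card V ^ 2 - Fintype.card V + 1 := by
        rw [Finset.sum_const, Finset.card_univ, smul_eq_mul, Nat.mul_sub_one, sq]

/-- If the network graph has `n = |V| ≥ 1` nodes, then `|U| ≤ n² − n + 1`. -/
theorem info_graph_upper_bound {V : Type*} [Fintype V] [Nonempty V]
    (D : V → V → ℕ∞)
    (ha : ∀ i, D i i = 0)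
    (hb : ∀ i ℓ j, D i j ≤ D i ℓ + D ℓ j)
    (hc : ∀ (k : ℕ) (i j : V),
      D i j ≤ (k : ℕ∞) + 1 ↔ ∃ ℓ, D i ℓ ≤ 1 ∧ D ℓ j ≤ (k : ℕ∞))
    (hd : ∀ i j, D i j = 0 → D j i = 0 → i = j) :
    (infoNodes D).ncard ≤ Fintype.card V ^ 2 - Fintype.card V + 1 :=
  info_graph_upper_bound_general D ha
end

section
/- The noise information set of each node equals the union of the label sets whose label contains that node: for every i ∈ V and t ∈ ℕ, ⋃_{s ∈ U : i ∈ s} L(t,s) = {(j,k) ∈ V × ℕ : k ≤ t and D i j ≤ t − k}. -/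
/-- The noise information set
`Î(t,i) = {(j,k) : k ≤ t ∧ D i j ≤ t − k}` (natural subtraction, in `ℕ∞`). -/
def infoSet {V : Type*} (D : V → V → ℕ∞) (t : ℕ) (i : V) : Set (V × ℕ) :=
  {p | p.2 ≤ t ∧ D i p.1 ≤ ((t - p.2 : ℕ) : ℕ∞)}

/-- The label sets, defined recursively: `L(0,s) = {(i,0) : ρ(i) = s}` and
`L(t+1,s) = {(i,t+1) : ρ(i) = s} ∪ ⋃_{r : σ(r) = s} L(t,r)`.
The pair `(j,k)` represents the noise vector `w_{k−1}^j`. -/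
def labelSet {V U₀ : Type*} (ρ : V → U₀) (σ : U₀ → U₀) : ℕ → U₀ → Set (V × ℕ)
  | 0, s => {p | p.2 = 0 ∧ ρ p.1 = s}
  | t + 1, s => {p | p.2 = t + 1 ∧ ρ p.1 = s} ∪
      ⋃ r ∈ {r : U₀ | σ r = s}, labelSet ρ σ t r

/-!
Unfolding the recursion, `(j, k) ∈ L(t, s)` exactly when `k ≤ t` and `s` is reached from the root
`ρ(j)` by `t - k` successor steps, i.e. `s = σ^(t-k)(ρ j)`. Since `σ^m(ρ j) = s(m, j)` as a set,
the condition `i ∈ s` for this unique `s` reads `D i j ≤ t - k`.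
-/

theorem mem_labelSet_iff {V U₀ : Type*} (ρ : V → U₀) (σ : U₀ → U₀) (t : ℕ) (s : U₀)
    (p : V × ℕ) : p ∈ labelSet ρ σ t s ↔ p.2 ≤ t ∧ σ^[t - p.2] (ρ p.1) = s := by
  induction t generalizing s with
  | zero => simp [labelSet]
  | succ t ih =>
    simp only [labelSet, Set.mem_union, Set.mem_ofPred_eq, Set.mem_iUnion, ih, exists_prop]
    rcases Nat.lt_or_ge t p.2 with hlt | hle
    · have htop : p.2 ≤ t + 1 ↔ p.2 = t + 1 := by omega
      have hnot_le : ¬ p.2 ≤ t := by omega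
      simp only [htop, hnot_le, false_and, and_false, exists_false, or_false]
      constructor <;> rintro ⟨hk, hs⟩ <;> exact ⟨hk, by simpa [hk] using hs⟩
    · have hsucc : t + 1 - p.2 = (t - p.2) + 1 := by omega
      have hnew : p.2 ≠ t + 1 := by omega
      simp only [hsucc, Function.iterate_succ_apply', hnew, false_and, false_or,
        hle, Nat.le_succ_of_le hle, true_and]
      exact ⟨fun ⟨r, hr, hs⟩ => hs ▸ hr, fun h => ⟨_, h, rfl⟩⟩

theorem coe_iterate_root {V : Type*} (D : V → V → ℕ∞)
    (σ : ↥(infoNodes D) → ↥(infoNodes D))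
    (hσ : ∀ (k : ℕ) (j : V),
      ((σ ⟨reach D k j, ⟨k, j, rfl⟩⟩ : ↥(infoNodes D)) : Set V) = reach D (k + 1) j)
    (ρ : V → ↥(infoNodes D))
    (hρ : ∀ j : V, ((ρ j : ↥(infoNodes D)) : Set V) = reach D 0 j) (m : ℕ) (j : V) :
    ((σ^[m] (ρ j) : ↥(infoNodes D)) : Set V) = reach D m j := by
  induction m with
  | zero => exact hρ j
  | succ m ih =>
    have hm : σ^[m] (ρ j) = ⟨reach D m j, m, j, rfl⟩ := Subtype.ext ih
    rw [Function.iterate_succ_apply', hm, hσ]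

theorem noise_info_eq_union_labels_general {V : Type*} (D : V → V → ℕ∞)
    (σ : ↥(infoNodes D) → ↥(infoNodes D))
    (hσ : ∀ (k : ℕ) (j : V),
      ((σ ⟨reach D k j, ⟨k, j, rfl⟩⟩ : ↥(infoNodes D)) : Set V) = reach D (k + 1) j)
    (ρ : V → ↥(infoNodes D))
    (hρ : ∀ j : V, ((ρ j : ↥(infoNodes D)) : Set V) = reach D 0 j) :
    ∀ (i : V) (t : ℕ),
      (⋃ s ∈ {s : ↥(infoNodes D) | i ∈ (s : Set V)}, labelSet ρ σ t s) =
        infoSet D t i := by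
  intro i t
  ext ⟨j, k⟩
  simp only [Set.mem_iUnion, Set.mem_ofPred_eq, mem_labelSet_iff, exists_prop]
  have hiter := coe_iterate_root D σ hσ ρ hρ (t - k) j
  constructor
  · rintro ⟨s, hi, hk, rfl⟩
    exact ⟨hk, (hiter ▸ hi : i ∈ reach D (t - k) j)⟩
  · rintro ⟨hk, hD⟩
    exact ⟨_, hiter ▸ (hD : i ∈ reach D (t - k) j), hk, rfl⟩

/-- The noise information set of node `i` equals the union of the label sets
whose label contains `i`: for every `i` and `t`,
`⋃_{s ∈ U : i ∈ s} L(t,s) = Î(t,i)`. -/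
theorem noise_info_eq_union_labels {V : Type*} [Fintype V] (D : V → V → ℕ∞)
    (ha : ∀ i, D i i = 0)
    (hb : ∀ i ℓ j, D i j ≤ D i ℓ + D ℓ j)
    (hc : ∀ (k : ℕ) (i j : V),
      D i j ≤ (k : ℕ∞) + 1 ↔ ∃ ℓ, D i ℓ ≤ 1 ∧ D ℓ j ≤ (k : ℕ∞))
    (σ : ↥(infoNodes D) → ↥(infoNodes D))
    (hσ : ∀ (k : ℕ) (j : V),
      ((σ ⟨reach D k j, ⟨k, j, rfl⟩⟩ : ↥(infoNodes D)) : Set V) = reach D (k + 1) j)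
    (ρ : V → ↥(infoNodes D))
    (hρ : ∀ j : V, ((ρ j : ↥(infoNodes D)) : Set V) = reach D 0 j) :
    ∀ (i : V) (t : ℕ),
      (⋃ s ∈ {s : ↥(infoNodes D) | i ∈ (s : Set V)}, labelSet ρ σ t s) =
        infoSet D t i :=
  noise_info_eq_union_labels_general D σ hσ ρ hρ
end

section
/- State decomposition: under the definitions below, the state decomposes over the information graph as x_t = Σ_{s ∈ 𝒰} ι_s(ζ_t^s) for every t ∈ ℕ. -/
/-! By induction on `t`. The compatibility `A_t ∘ ι_r = ι_{σ(r)} ∘ Â_t^r` (and likewise for `B_t`)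
lets the dynamics act on each component `ι_r(ζ_t^r)` separately, sending it to node `σ(r)`;
regrouping the components by their successor is exactly the recursion for `ζ_{t+1}`. The noise
is distributed over the roots and reassembles to `w_t` because every `i` lies in `ρ(i)`. -/

noncomputable section
open Classical

/-- The linear inclusion `ι_s : X^s → X` placing the coordinates of `s`
and zero elsewhere. -/
def incl {V : Type*} (X : V → Type*) [∀ i, AddCommGroup (X i)]
    [∀ i, Module ℝ (X i)] (s : Set V) :
    (∀ i : s, X (i : V)) →ₗ[ℝ] (∀ i, X i) where
  toFun v i := if h : i ∈ s then v ⟨i, h⟩ else 0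
  map_add' u v := by funext i; by_cases h : i ∈ s <;> simp [h]
  map_smul' c v := by funext i; by_cases h : i ∈ s <;> simp [h]

lemma sum_apply_sum_dite_eq {R U I M : Type*} [Semiring R] [Fintype U] [Fintype I]
    {P : U → Type*} [∀ s, AddCommMonoid (P s)] [∀ s, Module R (P s)]
    [AddCommMonoid M] [Module R M] (f : ∀ s, P s →ₗ[R] M) (π : I → U)
    (c : ∀ i s, π i = s → P s) :
    ∑ s, f s (∑ i, if h : π i = s then c i s h else 0) = ∑ i, f (π i) (c i (π i) rfl) := by
  simp only [map_sum, apply_dite (f _), map_zero]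
  rw [Finset.sum_comm]
  exact Finset.sum_congr rfl fun i _ => by simp

lemma map_sum_of_comp_eq {R ι M N : Type*} [Semiring R] [Fintype ι]
    [AddCommMonoid M] [Module R M] [AddCommMonoid N] [Module R N]
    {P Q : ι → Type*} [∀ r, AddCommMonoid (P r)] [∀ r, Module R (P r)]
    [∀ r, AddCommMonoid (Q r)] [∀ r, Module R (Q r)]
    {f : M →ₗ[R] N} {g : ∀ r, P r →ₗ[R] M} {g' : ∀ r, Q r →ₗ[R] N} {h : ∀ r, P r →ₗ[R] Q r}
    (H : ∀ r, f ∘ₗ g r = g' r ∘ₗ h r) (v : ∀ r, P r) :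
    f (∑ r, g r (v r)) = ∑ r, g' r (h r (v r)) := by
  rw [map_sum]
  exact Finset.sum_congr rfl fun r _ => LinearMap.congr_fun (H r) (v r)

lemma incl_single {V : Type*} [DecidableEq V] (X : V → Type*) [∀ i, AddCommGroup (X i)]
    [∀ i, Module ℝ (X i)] (s : Set V) (i : V) (h : i ∈ s) (v : X i) :
    incl X s (LinearMap.single ℝ (fun j : s => X (j : V)) ⟨i, h⟩ v) = Pi.single i v := by
  funext j
  by_cases hj : j = i
  · subst hj
    simp [incl, h]
  · by_cases hjs : j ∈ s
    · have hne : (⟨j, hjs⟩ : s) ≠ ⟨i, h⟩ := by simp [hj]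
      simp [incl, hjs, LinearMap.single_apply, hne, hj]
    · simp [incl, hjs, hj]

lemma sum_incl_root {V U : Type*} [Fintype V] [DecidableEq V] [Fintype U]
    (X : V → Type*) [∀ i, AddCommGroup (X i)] [∀ i, Module ℝ (X i)]
    (m : U → Set V) (ρ : V → U) (hρ : ∀ i, i ∈ m (ρ i)) (g : ∀ i, X i) :
    ∑ s, incl X (m s) (∑ i : V, if h : ρ i = s then
        LinearMap.single ℝ (fun j : m s => X (j : V)) ⟨i, h ▸ hρ i⟩ (g i) else 0) = g := by
  rw [sum_apply_sum_dite_eq]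
  simp only [incl_single]
  exact Finset.univ_sum_single g

/-- Here `U₀` indexes the nodes of the information graph, `m s ⊆ V` is the label of node `s`,
and `w k` denotes the noise `w_{k−1}` (so `w 0` is the initial condition). -/
theorem state_decomposition {V : Type*} [Fintype V] [DecidableEq V]
    {U₀ : Type*} [Fintype U₀]
    (Xf Yf : V → Type*)
    [∀ i, AddCommGroup (Xf i)] [∀ i, Module ℝ (Xf i)]
    [∀ i, AddCommGroup (Yf i)] [∀ i, Module ℝ (Yf i)]
    (m : U₀ → Set V) (σ : U₀ → U₀) (ρ : V → U₀)
    (hρ : ∀ i, i ∈ m (ρ i))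
    (A : ℕ → ((∀ i, Xf i) →ₗ[ℝ] (∀ i, Xf i)))
    (B : ℕ → ((∀ i, Yf i) →ₗ[ℝ] (∀ i, Xf i)))
    (Ah : ∀ (_ : ℕ) (r : U₀), (∀ i : m r, Xf (i : V)) →ₗ[ℝ] (∀ i : m (σ r), Xf (i : V)))
    (Bh : ∀ (_ : ℕ) (r : U₀), (∀ i : m r, Yf (i : V)) →ₗ[ℝ] (∀ i : m (σ r), Xf (i : V)))
    (hA : ∀ t r, (A t) ∘ₗ incl Xf (m r) = (incl Xf (m (σ r))) ∘ₗ (Ah t r))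
    (hB : ∀ t r, (B t) ∘ₗ incl Yf (m r) = (incl Xf (m (σ r))) ∘ₗ (Bh t r))
    (w : ℕ → ∀ i, Xf i)
    (φ : ℕ → ∀ r : U₀, (∀ i : m r, Yf (i : V)))
    (ζ : ℕ → ∀ s : U₀, (∀ i : m s, Xf (i : V)))
    (hζ0 : ∀ s : U₀, ζ 0 s =
      ∑ i : V, if h : ρ i = s then
        LinearMap.single ℝ (fun j : m s => Xf (j : V)) ⟨i, h ▸ hρ i⟩ (w 0 i) else 0)
    (hζ : ∀ (t : ℕ) (s : U₀), ζ (t + 1) s =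
      (∑ r : U₀, if h : σ r = s then
        h ▸ ((Ah t r) (ζ t r) + (Bh t r) (φ t r)) else 0) +
      ∑ i : V, if h : ρ i = s then
        LinearMap.single ℝ (fun j : m s => Xf (j : V)) ⟨i, h ▸ hρ i⟩ (w (t + 1) i) else 0)
    (u : ℕ → ∀ i, Yf i)
    (hu : ∀ t, u t = ∑ r : U₀, incl Yf (m r) (φ t r))
    (x : ℕ → ∀ i, Xf i)
    (hx0 : x 0 = w 0)
    (hx : ∀ t, x (t + 1) = A t (x t) + B t (u t) + w (t + 1)) :
    ∀ t, x t = ∑ s : U₀, incl Xf (m s) (ζ t s) := by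
  intro t
  induction t with
  | zero => simp only [hx0, hζ0]; exact (sum_incl_root Xf m ρ hρ (w 0)).symm
  | succ t ih =>
    rw [hx, ih, hu, map_sum_of_comp_eq (hA t), map_sum_of_comp_eq (hB t)]
    simp only [hζ, map_add, Finset.sum_add_distrib]
    rw [sum_apply_sum_dite_eq (fun s => incl Xf (m s)) σ, sum_incl_root Xf m ρ hρ]
    simp only [map_add, Finset.sum_add_distrib]
end
end

section
/- Each controller state depends only on the noise terms in its label set: suppose the inputs are generated by the feedback law φ_t^r = K_t^r(ζ_t^r) for given linear maps K_t^r : X^r → Y^r. If (w_t^i) and (w'_t{}^i) are two noise families such that w_{k−1}^j = w'_{k−1}{}^j for every pair (j,k) ∈ L(t,s), then the corresponding recursively defined vectors ζ_t^s computed from the two noise families are equal; moreover the map from the noise family to ζ_t^s is linear. -/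
noncomputable section
open Classical

/-- The controller states `ζ_t^s` of the closed-loop system with feedback
`φ_t^r = K_t^r(ζ_t^r)`, as a function of the noise family `w`
(`w k i` denotes `w_{k−1}^i`, so `w 0` is the initial condition). -/
def zeta {V : Type*} [Fintype V] {U₀ : Type*} [Fintype U₀]
    (Xf Yf : V → Type*)
    [∀ i, AddCommGroup (Xf i)] [∀ i, Module ℝ (Xf i)]
    [∀ i, AddCommGroup (Yf i)] [∀ i, Module ℝ (Yf i)]
    (m : U₀ → Set V) (σ : U₀ → U₀) (ρ : V → U₀) (hρ : ∀ i, i ∈ m (ρ i))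
    (Ah : ∀ (_ : ℕ) (r : U₀), (∀ i : m r, Xf (i : V)) →ₗ[ℝ] (∀ i : m (σ r), Xf (i : V)))
    (Bh : ∀ (_ : ℕ) (r : U₀), (∀ i : m r, Yf (i : V)) →ₗ[ℝ] (∀ i : m (σ r), Xf (i : V)))
    (K : ∀ (_ : ℕ) (r : U₀), (∀ i : m r, Xf (i : V)) →ₗ[ℝ] (∀ i : m r, Yf (i : V)))
    (w : ℕ → ∀ i, Xf i) : ℕ → ∀ s : U₀, (∀ i : m s, Xf (i : V))
  | 0 => fun s => ∑ i : V, if h : ρ i = s then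
      LinearMap.single ℝ (fun j : m s => Xf (j : V)) ⟨i, h ▸ hρ i⟩ (w 0 i) else 0
  | t + 1 => fun s =>
      (∑ r : U₀, if h : σ r = s then
        h ▸ ((Ah t r) (zeta Xf Yf m σ ρ hρ Ah Bh K w t r) +
             (Bh t r) ((K t r) (zeta Xf Yf m σ ρ hρ Ah Bh K w t r))) else 0) +
      ∑ i : V, if h : ρ i = s then
        LinearMap.single ℝ (fun j : m s => Xf (j : V)) ⟨i, h ▸ hρ i⟩ (w (t + 1) i) else 0

theorem Fintype.sum_dite_eq_smul_add {ι R M : Type*} [Fintype ι] [Semiring R] [AddCommMonoid M]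
    [Module R M] (p : ι → Prop) [DecidablePred p] (c : R) (f g h : ∀ i, p i → M)
    (hfg : ∀ i hi, h i hi = c • f i hi + g i hi) :
    (∑ i, if hi : p i then h i hi else 0) =
      c • (∑ i, if hi : p i then f i hi else 0) + ∑ i, if hi : p i then g i hi else 0 := by
  rw [Finset.smul_sum, ← Finset.sum_add_distrib]
  refine Finset.sum_congr rfl fun i _ => ?_
  split_ifs with hi
  · exact hfg i hi
  · simp

section

variable {V : Type*} [Fintype V] {U₀ : Type*} [Fintype U₀] (Xf Yf : V → Type*)
  [∀ i, AddCommGroup (Xf i)] [∀ i, Module ℝ (Xf i)]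
  [∀ i, AddCommGroup (Yf i)] [∀ i, Module ℝ (Yf i)]
  (m : U₀ → Set V) (σ : U₀ → U₀) (ρ : V → U₀) (hρ : ∀ i, i ∈ m (ρ i))
  (Ah : ∀ (_ : ℕ) (r : U₀), (∀ i : m r, Xf (i : V)) →ₗ[ℝ] (∀ i : m (σ r), Xf (i : V)))
  (Bh : ∀ (_ : ℕ) (r : U₀), (∀ i : m r, Yf (i : V)) →ₗ[ℝ] (∀ i : m (σ r), Xf (i : V)))
  (K : ∀ (_ : ℕ) (r : U₀), (∀ i : m r, Xf (i : V)) →ₗ[ℝ] (∀ i : m r, Yf (i : V)))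

theorem zeta_congr_of_eqOn_labelSet {w w' : ℕ → ∀ i, Xf i} (t : ℕ) (s : U₀)
    (hww' : ∀ p ∈ labelSet ρ σ t s, w p.2 p.1 = w' p.2 p.1) :
    zeta Xf Yf m σ ρ hρ Ah Bh K w t s = zeta Xf Yf m σ ρ hρ Ah Bh K w' t s := by
  induction t generalizing s with
  | zero =>
    refine Finset.sum_congr rfl fun i _ => dite_congr rfl (fun hi => ?_) fun _ => rfl
    rw [hww' (i, 0) ⟨rfl, hi⟩]
  | succ t ih =>
    have hpred : ∀ r, σ r = s → zeta Xf Yf m σ ρ hρ Ah Bh K w t r =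
        zeta Xf Yf m σ ρ hρ Ah Bh K w' t r := fun r hr =>
      ih r fun p hp => hww' p (Or.inr (Set.mem_biUnion hr hp))
    simp only [zeta]
    congr 1
    · refine Finset.sum_congr rfl fun r _ => dite_congr rfl (fun hr => ?_) fun _ => rfl
      rw [hpred r hr]
    · refine Finset.sum_congr rfl fun i _ => dite_congr rfl (fun hi => ?_) fun _ => rfl
      rw [hww' (i, t + 1) (Or.inl ⟨rfl, hi⟩)]

theorem zeta_smul_add (w w' : ℕ → ∀ i, Xf i) (c : ℝ) (t : ℕ) (s : U₀) :
    zeta Xf Yf m σ ρ hρ Ah Bh K (fun k i => c • w k i + w' k i) t s =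
      c • zeta Xf Yf m σ ρ hρ Ah Bh K w t s + zeta Xf Yf m σ ρ hρ Ah Bh K w' t s := by
  induction t generalizing s with
  | zero =>
    exact Fintype.sum_dite_eq_smul_add _ c _ _ _ fun i hi => by simp only [map_add, map_smul]
  | succ t ih =>
    simp only [zeta]
    rw [smul_add, add_add_add_comm]
    congr 1
    · refine Fintype.sum_dite_eq_smul_add _ c _ _ _ fun r hr => ?_
      subst hr
      simp only [ih, map_add, map_smul, smul_add]
      abel
    · exact Fintype.sum_dite_eq_smul_add _ c _ _ _ fun i hi => by simp only [map_add, map_smul]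

end

/-- Each controller state depends only on the noise terms in its label set:
if two noise families agree on `L(t,s)`, the corresponding `ζ_t^s` are equal;
moreover the map from the noise family to `ζ_t^s` is linear. -/
theorem zeta_depends_only_on_labelSet {V : Type*} [Fintype V]
    {U₀ : Type*} [Fintype U₀]
    (Xf Yf : V → Type*)
    [∀ i, AddCommGroup (Xf i)] [∀ i, Module ℝ (Xf i)]
    [∀ i, AddCommGroup (Yf i)] [∀ i, Module ℝ (Yf i)]
    (m : U₀ → Set V) (σ : U₀ → U₀) (ρ : V → U₀) (hρ : ∀ i, i ∈ m (ρ i))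
    (Ah : ∀ (_ : ℕ) (r : U₀), (∀ i : m r, Xf (i : V)) →ₗ[ℝ] (∀ i : m (σ r), Xf (i : V)))
    (Bh : ∀ (_ : ℕ) (r : U₀), (∀ i : m r, Yf (i : V)) →ₗ[ℝ] (∀ i : m (σ r), Xf (i : V)))
    (K : ∀ (_ : ℕ) (r : U₀), (∀ i : m r, Xf (i : V)) →ₗ[ℝ] (∀ i : m r, Yf (i : V))) :
    (∀ (w w' : ℕ → ∀ i, Xf i) (t : ℕ) (s : U₀),
      (∀ p ∈ labelSet ρ σ t s, w p.2 p.1 = w' p.2 p.1) →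
      zeta Xf Yf m σ ρ hρ Ah Bh K w t s = zeta Xf Yf m σ ρ hρ Ah Bh K w' t s) ∧
    (∀ (w w' : ℕ → ∀ i, Xf i) (c : ℝ) (t : ℕ) (s : U₀),
      zeta Xf Yf m σ ρ hρ Ah Bh K (fun k i => c • w k i + w' k i) t s =
        c • zeta Xf Yf m σ ρ hρ Ah Bh K w t s +
          zeta Xf Yf m σ ρ hρ Ah Bh K w' t s) :=
  ⟨fun _ _ => zeta_congr_of_eqOn_labelSet Xf Yf m σ ρ hρ Ah Bh K,
    zeta_smul_add Xf Yf m σ ρ hρ Ah Bh K⟩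
end
end

section
/- Optimality of the Riccati gain: for every ζ ∈ ℝⁿ, the function φ ↦ ζᵀQζ + 2ζᵀSφ + φᵀRφ + (Aζ + Bφ)ᵀX'(Aζ + Bφ) attains its minimum over φ ∈ ℝᵐ uniquely at φ = Kζ, the minimum value equals ζᵀXζ, and the matrix X is positive semidefinite. -/
/-!
With `M = S + AᵀX'B`, the cost is the quadratic form at `(ζ, φ)` of the block matrix
`[[Q, S], [Sᵀ, R]] + [A B]ᵀ X' [A B] = [[Q + AᵀX'A, M], [Mᵀ, Ω]]`, which is positive
semidefinite as a sum of two such matrices. Completing the square in `φ` writes the cost as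
`ζᵀ (Q + AᵀX'A - MΩ⁻¹Mᵀ) ζ + (φ - Kζ)ᵀ Ω (φ - Kζ)`, and `KᵀΩK = MΩ⁻¹Mᵀ`, so the first term is
`ζᵀXζ`. Thus `X` is the Schur complement of `Ω` in a positive semidefinite matrix, hence positive
semidefinite, and positive definiteness of `Ω` makes `Kζ` the unique minimiser.
-/

open Matrix

namespace Matrix

variable {ι κ ρ : Type*}

lemma PosSemidef.transpose_mul_mul_same [Fintype ι] [Fintype ρ] {N : Matrix ρ ρ ℝ}
    (hN : N.PosSemidef) (C : Matrix ρ ι ℝ) : (Cᵀ * N * C).PosSemidef := by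
  simpa only [conjTranspose_eq_transpose_of_trivial] using hN.conjTranspose_mul_mul_same C

lemma PosDef.uniqueMin_of_eq_add_dotProduct_mulVec [Fintype κ] {Ω : Matrix κ κ ℝ}
    (hΩ : Ω.PosDef) {f : (κ → ℝ) → ℝ} {φ₀ : κ → ℝ} {c : ℝ}
    (hf : ∀ φ, f φ = c + (φ - φ₀) ⬝ᵥ Ω *ᵥ (φ - φ₀)) :
    (∀ φ, f φ₀ ≤ f φ) ∧ (∀ φ, f φ = f φ₀ → φ = φ₀) ∧ f φ₀ = c := by
  have hmin : f φ₀ = c := by simp [hf]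
  refine ⟨fun φ => ?_, fun φ hφ => ?_, hmin⟩
  · simpa [hmin, hf φ] using hΩ.posSemidef.dotProduct_mulVec_nonneg (φ - φ₀)
  · by_contra hne
    have hpos := hΩ.dotProduct_mulVec_pos (sub_ne_zero.mpr hne)
    rw [star_trivial] at hpos
    linarith [hf φ]

lemma dotProduct_transpose_mul_mul_mulVec [Fintype ι] [Fintype ρ] (C : Matrix ρ ι ℝ)
    (N : Matrix ρ ρ ℝ) (v : ι → ℝ) :
    v ⬝ᵥ (Cᵀ * N * C) *ᵥ v = (C *ᵥ v) ⬝ᵥ N *ᵥ (C *ᵥ v) := by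
  rw [← mulVec_mulVec, ← mulVec_mulVec, dotProduct_mulVec, vecMul_transpose]

lemma sumElim_dotProduct_fromBlocks_mulVec [Fintype ι] [Fintype κ] (Q : Matrix ι ι ℝ)
    (S : Matrix ι κ ℝ) (R : Matrix κ κ ℝ) (ζ : ι → ℝ) (φ : κ → ℝ) :
    (ζ ⊕ᵥ φ) ⬝ᵥ fromBlocks Q S Sᵀ R *ᵥ (ζ ⊕ᵥ φ)
      = ζ ⬝ᵥ Q *ᵥ ζ + 2 * (ζ ⬝ᵥ S *ᵥ φ) + φ ⬝ᵥ R *ᵥ φ := by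
  rw [fromBlocks_mulVec, Sum.elim_comp_inl, Sum.elim_comp_inr, sumElim_dotProduct_sumElim,
    dotProduct_add, dotProduct_add, mulVec_transpose, dotProduct_comm φ, ← dotProduct_mulVec]
  ring

lemma dotProduct_fromBlocks_mulVec_eq_schur [Fintype ι] [Fintype κ] [DecidableEq κ]
    (P : Matrix ι ι ℝ) (M : Matrix ι κ ℝ) {Ω : Matrix κ κ ℝ} [Invertible Ω] (hΩ : Ω.IsSymm)
    (ζ : ι → ℝ) (φ : κ → ℝ) :
    (ζ ⊕ᵥ φ) ⬝ᵥ fromBlocks P M Mᵀ Ω *ᵥ (ζ ⊕ᵥ φ) =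
      ζ ⬝ᵥ (P - M * Ω⁻¹ * Mᵀ) *ᵥ ζ +
        (φ - -(Ω⁻¹ * Mᵀ) *ᵥ ζ) ⬝ᵥ Ω *ᵥ (φ - -(Ω⁻¹ * Mᵀ) *ᵥ ζ) := by
  have h := schur_complement_eq₂₂ P M ζ φ (isHermitian_iff_isSymm.mpr hΩ)
  simp only [star_trivial, conjTranspose_eq_transpose_of_trivial, ← dotProduct_mulVec] at h
  rw [h, add_comm, neg_mulVec, sub_neg_eq_add, add_comm φ]

lemma transpose_neg_inv_mul_mul_mul_neg_inv_mul [Fintype κ] [DecidableEq κ] {Ω : Matrix κ κ ℝ}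
    [Invertible Ω] (hΩ : Ω.IsSymm) (M : Matrix ι κ ℝ) :
    (-(Ω⁻¹ * Mᵀ))ᵀ * Ω * -(Ω⁻¹ * Mᵀ) = M * Ω⁻¹ * Mᵀ := by
  rw [transpose_neg, transpose_mul, transpose_transpose, transpose_nonsing_inv, hΩ.eq]
  simp [Matrix.mul_assoc]

section Riccati

variable (Q : Matrix ι ι ℝ) (S : Matrix ι κ ℝ) (R : Matrix κ κ ℝ) (A : Matrix ρ ι ℝ)
  (B : Matrix ρ κ ℝ) {X' : Matrix ρ ρ ℝ}

lemma fromBlocks_add_transpose_fromCols_mul_mul [Fintype ρ] (hX' : X'.IsSymm) :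
    fromBlocks Q S Sᵀ R + (fromCols A B)ᵀ * X' * fromCols A B =
      fromBlocks (Q + Aᵀ * X' * A) (S + Aᵀ * X' * B) (S + Aᵀ * X' * B)ᵀ (R + Bᵀ * X' * B) := by
  rw [transpose_fromCols, fromRows_mul, fromRows_mul_fromCols, fromBlocks_add, transpose_add,
    transpose_mul, transpose_mul, transpose_transpose, hX'.eq, Matrix.mul_assoc Bᵀ]

lemma riccatiCost_eq_dotProduct_fromBlocks_mulVec [Fintype ι] [Fintype κ] [Fintype ρ]
    (hX' : X'.IsSymm) (ζ : ι → ℝ) (φ : κ → ℝ) :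
    ζ ⬝ᵥ Q *ᵥ ζ + 2 * (ζ ⬝ᵥ S *ᵥ φ) + φ ⬝ᵥ R *ᵥ φ +
        (A *ᵥ ζ + B *ᵥ φ) ⬝ᵥ X' *ᵥ (A *ᵥ ζ + B *ᵥ φ) =
      (ζ ⊕ᵥ φ) ⬝ᵥ fromBlocks (Q + Aᵀ * X' * A) (S + Aᵀ * X' * B) (S + Aᵀ * X' * B)ᵀ
        (R + Bᵀ * X' * B) *ᵥ (ζ ⊕ᵥ φ) := by
  rw [← fromBlocks_add_transpose_fromCols_mul_mul Q S R A B hX', add_mulVec, dotProduct_add,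
    sumElim_dotProduct_fromBlocks_mulVec, dotProduct_transpose_mul_mul_mulVec,
    fromCols_mulVec_sumElim]

end Riccati

end Matrix

theorem riccati_gain_optimal_general (n m p : ℕ)
    (Q : Matrix (Fin n) (Fin n) ℝ) (S : Matrix (Fin n) (Fin m) ℝ)
    (R : Matrix (Fin m) (Fin m) ℝ) (A : Matrix (Fin p) (Fin n) ℝ)
    (B : Matrix (Fin p) (Fin m) ℝ) (X' : Matrix (Fin p) (Fin p) ℝ)
    (hX' : X'.PosSemidef) (hR : R.PosDef)
    (hblock : (Matrix.fromBlocks Q S Sᵀ R).PosSemidef) :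
    let Ω : Matrix (Fin m) (Fin m) ℝ := R + Bᵀ * X' * B
    let K : Matrix (Fin m) (Fin n) ℝ := -(Ω⁻¹ * (S + Aᵀ * X' * B)ᵀ)
    let X : Matrix (Fin n) (Fin n) ℝ := Q + Aᵀ * X' * A - Kᵀ * Ω * K
    X.PosSemidef ∧
    ∀ ζ : Fin n → ℝ,
      let f : (Fin m → ℝ) → ℝ := fun φ =>
        ζ ⬝ᵥ Q.mulVec ζ + 2 * (ζ ⬝ᵥ S.mulVec φ) + φ ⬝ᵥ R.mulVec φ +
          (A.mulVec ζ + B.mulVec φ) ⬝ᵥ X'.mulVec (A.mulVec ζ + B.mulVec φ)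
      (∀ φ : Fin m → ℝ, f (K.mulVec ζ) ≤ f φ) ∧
      (∀ φ : Fin m → ℝ, f φ = f (K.mulVec ζ) → φ = K.mulVec ζ) ∧
      f (K.mulVec ζ) = ζ ⬝ᵥ X.mulVec ζ := by
  intro Ω K X
  have hX's : X'.IsSymm := isHermitian_iff_isSymm.mp hX'.isHermitian
  have hΩ : Ω.PosDef := hR.add_posSemidef (hX'.transpose_mul_mul_same B)
  have hΩs : Ω.IsSymm := isHermitian_iff_isSymm.mp hΩ.isHermitian
  have := hΩ.isUnit.invertible
  have hX : X = Q + Aᵀ * X' * A - (S + Aᵀ * X' * B) * Ω⁻¹ * (S + Aᵀ * X' * B)ᵀ :=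
    congrArg (Q + Aᵀ * X' * A - ·) (transpose_neg_inv_mul_mul_mul_neg_inv_mul hΩs _)
  have hG : (fromBlocks (Q + Aᵀ * X' * A) (S + Aᵀ * X' * B) (S + Aᵀ * X' * B)ᵀ Ω).PosSemidef := by
    rw [← fromBlocks_add_transpose_fromCols_mul_mul Q S R A B hX's]
    exact hblock.add (hX'.transpose_mul_mul_same (fromCols A B))
  refine ⟨?_, fun ζ => ?_⟩
  · rw [hX]
    simpa only [conjTranspose_eq_transpose_of_trivial] using (PosDef.fromBlocks₂₂ _ _ hΩ).mp
      (by simpa only [conjTranspose_eq_transpose_of_trivial] using hG)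
  · intro f
    refine hΩ.uniqueMin_of_eq_add_dotProduct_mulVec fun φ => ?_
    rw [hX]
    exact (riccatiCost_eq_dotProduct_fromBlocks_mulVec Q S R A B hX's ζ φ).trans
      (dotProduct_fromBlocks_mulVec_eq_schur _ _ hΩs ζ φ)

/-- Optimality of the Riccati gain: with `Ω = R + BᵀX'B`,
`K = −Ω⁻¹(S + AᵀX'B)ᵀ` and `X = Q + AᵀX'A − KᵀΩK`, for every `ζ` the function
`φ ↦ ζᵀQζ + 2ζᵀSφ + φᵀRφ + (Aζ + Bφ)ᵀX'(Aζ + Bφ)` attains its minimum uniquely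
at `φ = Kζ`, the minimum value is `ζᵀXζ`, and `X` is positive semidefinite. -/
theorem riccati_gain_optimal (n m p : ℕ)
    (Q : Matrix (Fin n) (Fin n) ℝ) (S : Matrix (Fin n) (Fin m) ℝ)
    (R : Matrix (Fin m) (Fin m) ℝ) (A : Matrix (Fin p) (Fin n) ℝ)
    (B : Matrix (Fin p) (Fin m) ℝ) (X' : Matrix (Fin p) (Fin p) ℝ)
    (hQ : Q.IsSymm) (hX' : X'.PosSemidef) (hR : R.PosDef)
    (hblock : (Matrix.fromBlocks Q S Sᵀ R).PosSemidef) :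
    let Ω : Matrix (Fin m) (Fin m) ℝ := R + Bᵀ * X' * B
    let K : Matrix (Fin m) (Fin n) ℝ := -(Ω⁻¹ * (S + Aᵀ * X' * B)ᵀ)
    let X : Matrix (Fin n) (Fin n) ℝ := Q + Aᵀ * X' * A - Kᵀ * Ω * K
    X.PosSemidef ∧
    ∀ ζ : Fin n → ℝ,
      let f : (Fin m → ℝ) → ℝ := fun φ =>
        ζ ⬝ᵥ Q.mulVec ζ + 2 * (ζ ⬝ᵥ S.mulVec φ) + φ ⬝ᵥ R.mulVec φ +
          (A.mulVec ζ + B.mulVec φ) ⬝ᵥ X'.mulVec (A.mulVec ζ + B.mulVec φ)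
      (∀ φ : Fin m → ℝ, f (K.mulVec ζ) ≤ f φ) ∧
      (∀ φ : Fin m → ℝ, f φ = f (K.mulVec ζ) → φ = K.mulVec ζ) ∧
      f (K.mulVec ζ) = ζ ⬝ᵥ X.mulVec ζ :=
  riccati_gain_optimal_general n m p Q S R A B X' hX' hR hblock
end

section
/- The message-passing induction order is well defined: the relation ≺ on ℕ × V given by (t,i) ≺ (τ,j) if and only if t < τ, or (t = τ and i ≠ j and D j i = 0), is irreflexive, transitive, and well-founded. -/
/-- The message-passing induction order on `ℕ × V`:
`(t,i) ≺ (τ,j)` iff `t < τ`, or `t = τ`, `i ≠ j` and `D j i = 0`. -/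
def precRel {V : Type*} (D : V → V → ℕ∞) : ℕ × V → ℕ × V → Prop :=
  fun p q => p.1 < q.1 ∨ (p.1 = q.1 ∧ p.2 ≠ q.2 ∧ D q.2 p.2 = 0)

/-!
Within one time step `≺` compares nodes by `i ≠ j ∧ D j i = 0`, so `≺` is the lexicographic
product of `<` on `ℕ` with that relation on `V`. The triangle inequality makes it transitive and
the absence of zero-delay cycles keeps it irreflexive under composition, so it is a strict order;
on a finite set a strict order is well-founded, and so is a lexicographic product of well-founded
relations.
-/

def zeroDelayRel {V : Type*} (D : V → V → ℕ∞) (i j : V) : Prop :=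
  i ≠ j ∧ D j i = 0

section ZeroDelay

variable {V : Type*} {D : V → V → ℕ∞}

instance zeroDelayRel_irrefl : Std.Irrefl (zeroDelayRel D) :=
  ⟨fun _ h => h.1 rfl⟩

theorem zeroDelayRel_trans (hb : ∀ i ℓ j, D i j ≤ D i ℓ + D ℓ j)
    (hd : ∀ i j, D i j = 0 → D j i = 0 → i = j) :
    IsTrans V (zeroDelayRel D) := by
  refine ⟨fun i j k ⟨hij, hji⟩ ⟨_, hkj⟩ => ?_⟩
  have hki : D k i = 0 := nonpos_iff_eq_zero.mp <| by simpa [hji, hkj] using hb k j i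
  refine ⟨?_, hki⟩
  rintro rfl
  exact hij (hd j i hji hkj).symm

theorem zeroDelayRel_wellFounded [Finite V] (hb : ∀ i ℓ j, D i j ≤ D i ℓ + D ℓ j)
    (hd : ∀ i j, D i j = 0 → D j i = 0 → i = j) :
    WellFounded (zeroDelayRel D) :=
  have := zeroDelayRel_trans hb hd
  Finite.wellFounded_of_trans_of_irrefl _

end ZeroDelay

theorem precRel_eq_lex {V : Type*} (D : V → V → ℕ∞) :
    precRel D = Prod.Lex (· < ·) (zeroDelayRel D) := by
  ext p q
  rw [Prod.lex_def]
  rfl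

theorem precRel_wellfounded_general {V : Type*} [Fintype V] (D : V → V → ℕ∞)
    (hb : ∀ i ℓ j, D i j ≤ D i ℓ + D ℓ j)
    (hd : ∀ i j, D i j = 0 → D j i = 0 → i = j) :
    (∀ p : ℕ × V, ¬ precRel D p p) ∧
    (∀ p q r : ℕ × V, precRel D p q → precRel D q r → precRel D p r) ∧
    WellFounded (precRel D) := by
  have := zeroDelayRel_trans hb hd
  rw [precRel_eq_lex]
  exact ⟨irrefl, fun _ _ _ => _root_.trans,
    wellFounded_lt.prod_lex (zeroDelayRel_wellFounded hb hd)⟩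

/-- The message-passing induction order is well defined: the relation `≺`
is irreflexive, transitive, and well-founded. -/
theorem precRel_wellfounded {V : Type*} [Fintype V] (D : V → V → ℕ∞)
    (ha : ∀ i, D i i = 0)
    (hb : ∀ i ℓ j, D i j ≤ D i ℓ + D ℓ j)
    (hd : ∀ i j, D i j = 0 → D j i = 0 → i = j) :
    (∀ p : ℕ × V, ¬ precRel D p p) ∧
    (∀ p q r : ℕ × V, precRel D p q → precRel D q r → precRel D p r) ∧
    WellFounded (precRel D) :=
  precRel_wellfounded_general D hb hd
end

section
/- A node of the information graph without a self-loop is visited at most once by each chain: if s ∈ U satisfies σ(s) ≠ s (where σ is the well-defined successor map), then for every j ∈ V there is at most one k ∈ ℕ with s(k,j) = s. Consequently the label set L(t,s) of such a node contains at most |V| elements, uniformly in t. -/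
/-!
Unfolding the recursion, `(i, m) ∈ L(t,s)` iff `m ≤ t` and `σ^[t-m] (ρ i) = s`, and
`σ^[n] (ρ i) = s(n,i)`. The chain `k ↦ s(k,j)` is monotone, so if it took the value `s` at
two times `a < b` it would be constant on `[a, b]`, giving `σ s = s(a+1,j) = s(a,j) = s`.
Hence for a node without self-loop each `i` contributes at most one label, i.e. `(i, m) ↦ i`
is injective on `L(t,s)`.
-/

theorem reach_monotone {V : Type*} (D : V → V → ℕ∞) (j : V) :
    Monotone fun k => reach D k j :=
  fun _ _ hkk' _ hi => le_trans (α := ℕ∞) hi (by exact_mod_cast hkk')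

theorem Monotone.apply_succ_eq_of_eq {α : Type*} [PartialOrder α] {f : ℕ → α}
    (hf : Monotone f) {a b : ℕ} (hab : a < b) (h : f a = f b) : f (a + 1) = f a :=
  le_antisymm (h ▸ hf hab) (hf a.le_succ)

theorem labelSet_ncard_le {V U₀ : Type*} [Fintype V] (ρ : V → U₀) (σ : U₀ → U₀) (s : U₀)
    (hvisit : ∀ (i : V) (m m' : ℕ), σ^[m] (ρ i) = s → σ^[m'] (ρ i) = s → m = m') (t : ℕ) :
    (labelSet ρ σ t s).ncard ≤ Fintype.card V := by
  have hinj : Set.InjOn Prod.fst (labelSet ρ σ t s) := by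
    intro p hp q hq hpq
    rw [mem_labelSet_iff] at hp hq
    rw [← hpq] at hq
    have := hvisit p.1 _ _ hp.2 hq.2
    exact Prod.ext hpq (by omega)
  calc (labelSet ρ σ t s).ncard = (Prod.fst '' labelSet ρ σ t s).ncard :=
        hinj.ncard_image.symm
    _ ≤ Nat.card V := Set.ncard_le_card _
    _ = Fintype.card V := Nat.card_eq_fintype_card

section InfoGraph

variable {V : Type*} {D : V → V → ℕ∞} {σ : ↥(infoNodes D) → ↥(infoNodes D)}

theorem coe_succ_eq_reach
    (hσ : ∀ (k : ℕ) (j : V),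
      ((σ ⟨reach D k j, ⟨k, j, rfl⟩⟩ : ↥(infoNodes D)) : Set V) = reach D (k + 1) j)
    {u : ↥(infoNodes D)} {k : ℕ} {j : V} (hu : (u : Set V) = reach D k j) :
    ((σ u : ↥(infoNodes D)) : Set V) = reach D (k + 1) j := by
  obtain rfl : u = ⟨reach D k j, ⟨k, j, rfl⟩⟩ := Subtype.ext hu
  exact hσ k j

theorem coe_iterate_root_eq_reach
    (hσ : ∀ (k : ℕ) (j : V),
      ((σ ⟨reach D k j, ⟨k, j, rfl⟩⟩ : ↥(infoNodes D)) : Set V) = reach D (k + 1) j)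
    {ρ : V → ↥(infoNodes D)} (hρ : ∀ j : V, ((ρ j : ↥(infoNodes D)) : Set V) = reach D 0 j)
    (m : ℕ) (i : V) : ((σ^[m] (ρ i) : ↥(infoNodes D)) : Set V) = reach D m i := by
  induction m with
  | zero => exact hρ i
  | succ m ih => rw [Function.iterate_succ_apply']; exact coe_succ_eq_reach hσ ih

theorem eq_of_reach_eq_of_succ_ne
    (hσ : ∀ (k : ℕ) (j : V),
      ((σ ⟨reach D k j, ⟨k, j, rfl⟩⟩ : ↥(infoNodes D)) : Set V) = reach D (k + 1) j)
    {s : ↥(infoNodes D)} (hs : σ s ≠ s) {j : V} {k k' : ℕ}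
    (hk : reach D k j = (s : Set V)) (hk' : reach D k' j = (s : Set V)) : k = k' := by
  have no_repeat : ∀ {a b : ℕ}, a < b → reach D a j = s → reach D b j = s → False :=
    fun hab ha hb => hs <| Subtype.ext <| by
      rw [coe_succ_eq_reach hσ ha.symm,
        (reach_monotone D j).apply_succ_eq_of_eq hab (ha.trans hb.symm), ha]
  rcases lt_trichotomy k k' with h | h | h
  · exact (no_repeat h hk hk').elim
  · exact h
  · exact (no_repeat h hk' hk).elim

end InfoGraph

theorem no_selfloop_visited_once_general {V : Type*} [Fintype V] (D : V → V → ℕ∞)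
    (σ : ↥(infoNodes D) → ↥(infoNodes D))
    (hσ : ∀ (k : ℕ) (j : V),
      ((σ ⟨reach D k j, ⟨k, j, rfl⟩⟩ : ↥(infoNodes D)) : Set V) = reach D (k + 1) j)
    (ρ : V → ↥(infoNodes D))
    (hρ : ∀ j : V, ((ρ j : ↥(infoNodes D)) : Set V) = reach D 0 j) :
    ∀ s : ↥(infoNodes D), σ s ≠ s →
      (∀ (j : V) (k k' : ℕ),
        reach D k j = (s : Set V) → reach D k' j = (s : Set V) → k = k') ∧
      ∀ t : ℕ, (labelSet ρ σ t s).ncard ≤ Fintype.card V := by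
  intro s hs
  refine ⟨fun j k k' => eq_of_reach_eq_of_succ_ne hσ hs, labelSet_ncard_le ρ σ s ?_⟩
  intro i m m' hm hm'
  exact eq_of_reach_eq_of_succ_ne hσ hs
    ((coe_iterate_root_eq_reach hσ hρ m i).symm.trans (congrArg Subtype.val hm))
    ((coe_iterate_root_eq_reach hσ hρ m' i).symm.trans (congrArg Subtype.val hm'))

/-- A node of the information graph without a self-loop is visited at most once
by each chain `k ↦ s(k,j)`; consequently its label set `L(t,s)` has at most
`|V|` elements, uniformly in `t`. -/
theorem no_selfloop_visited_once {V : Type*} [Fintype V] (D : V → V → ℕ∞)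
    (ha : ∀ i, D i i = 0)
    (hb : ∀ i ℓ j, D i j ≤ D i ℓ + D ℓ j)
    (hc : ∀ (k : ℕ) (i j : V),
      D i j ≤ (k : ℕ∞) + 1 ↔ ∃ ℓ, D i ℓ ≤ 1 ∧ D ℓ j ≤ (k : ℕ∞))
    (σ : ↥(infoNodes D) → ↥(infoNodes D))
    (hσ : ∀ (k : ℕ) (j : V),
      ((σ ⟨reach D k j, ⟨k, j, rfl⟩⟩ : ↥(infoNodes D)) : Set V) = reach D (k + 1) j)
    (ρ : V → ↥(infoNodes D))
    (hρ : ∀ j : V, ((ρ j : ↥(infoNodes D)) : Set V) = reach D 0 j) :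
    ∀ s : ↥(infoNodes D), σ s ≠ s →
      (∀ (j : V) (k k' : ℕ),
        reach D k j = (s : Set V) → reach D k' j = (s : Set V) → k = k') ∧
      ∀ t : ℕ, (labelSet ρ σ t s).ncard ≤ Fintype.card V :=
  no_selfloop_visited_once_general D σ hσ ρ hρ
end
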